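/- arXiv:1912.03617 — 5 statements merged into one kernel-verified Lean document; each statement's English description precedes it below -/
import Mathlib

section
/- Let $H$ be a real Hilbert space with a continuous symmetric positive definite bilinear form $a(\cdot,\cdot)$, and let $H_1, \dots, H_N$ be Hilbert spaces with bounded linear maps $R_k^* : H_k \to H$. Suppose strengthened Cauchy–Schwarz inequalities hold: $|a(R_i^* w_i, R_j^* w_j)| \le \epsilon_{ij}\, a(R_i^* w_i, R_i^* w_i)^{1/2} a(R_j^* w_j, R_j^* w_j)^{1/2}$ for all $w_i \in H_i, w_j \in H_j$, with constants $\epsilon_{ij} \in [0,1]$. Then $a\left(\sum_{k=1}^N R_k^* w_k, \sum_{k=1}^N R_k^* w_k\right) \le \rho(\mathcal{E}) \sum_{k=1}^N a(R_k^* w_k, R_k^* w_k)$, where $\rho(\mathcal{E})$ is the spectral radius of the symmetric matrix $\mathcal{E} = [\epsilon_{ij}]_{i,j=1}^N$. -/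
open scoped BigOperators
open Matrix

lemma quad_le_sup_eigen {N : ℕ} (hne : (Finset.univ : Finset (Fin N)).Nonempty)
    (ε : Matrix (Fin N) (Fin N) ℝ) (hε : ε.IsHermitian) (v : Fin N → ℝ) :
    v ⬝ᵥ ε.mulVec v ≤ (Finset.univ.sup' hne hε.eigenvalues) * (v ⬝ᵥ v) := by
  classical
  set U : Matrix (Fin N) (Fin N) ℝ := (hε.eigenvectorUnitary : Matrix (Fin N) (Fin N) ℝ)
    with hU
  have hstarT : star U = Uᵀ := by
    ext i j; simp [Matrix.conjTranspose_apply]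
  have hUU : U * Uᵀ = 1 := by
    rw [← hstarT]; exact Matrix.mem_unitaryGroup_iff.mp hε.eigenvectorUnitary.2
  have hspec : ε = U * Matrix.diagonal hε.eigenvalues * Uᵀ := by
    rw [← hstarT, hU]
    simpa [Function.comp] using hε.spectral_theorem
  set c : Fin N → ℝ := Uᵀ *ᵥ v with hc
  have hquad : v ⬝ᵥ ε.mulVec v = ∑ j, hε.eigenvalues j * (c j)^2 := by
    conv_lhs => rw [hspec]
    rw [← Matrix.mulVec_mulVec, ← Matrix.mulVec_mulVec, Matrix.dotProduct_mulVec v U,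
      ← Matrix.mulVec_transpose, ← hc]
    simp [dotProduct, Matrix.mulVec_diagonal, pow_two]
    exact Finset.sum_congr rfl fun j _ => by ring
  have hnorm : v ⬝ᵥ v = ∑ j, (c j)^2 := by
    have h1 : c ⬝ᵥ c = v ⬝ᵥ v := by
      nth_rewrite 2 [hc]
      rw [Matrix.dotProduct_mulVec c Uᵀ, Matrix.vecMul_transpose, Matrix.mulVec_mulVec, hUU,
        Matrix.one_mulVec, dotProduct_comm]
    rw [← h1]
    simp [dotProduct, pow_two]
  rw [hquad, hnorm, Finset.mul_sum]
  apply Finset.sum_le_sum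
  intro j _
  exact mul_le_mul_of_nonneg_right (Finset.le_sup' _ (Finset.mem_univ j)) (sq_nonneg _)

/-- Strengthened Cauchy–Schwarz inequalities imply the spectral-radius bound
on the energy of a sum (the spectral radius of a real symmetric matrix is its
largest eigenvalue). -/
theorem stmt7 {H : Type*} [NormedAddCommGroup H] [InnerProductSpace ℝ H] [CompleteSpace H]
    {N : ℕ} (hN : 0 < N)
    (Hk : Fin N → Type*) [∀ k, NormedAddCommGroup (Hk k)]
    [∀ k, InnerProductSpace ℝ (Hk k)] [∀ k, CompleteSpace (Hk k)]
    (R : ∀ k, Hk k →L[ℝ] H)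
    (a : H →L[ℝ] H →L[ℝ] ℝ)
    (hsymm : ∀ x y, a x y = a y x) (hpos : ∀ x, x ≠ 0 → 0 < a x x)
    (ε : Matrix (Fin N) (Fin N) ℝ) (hε : ε.IsHermitian)
    (hε01 : ∀ i j, ε i j ∈ Set.Icc (0 : ℝ) 1)
    (hCS : ∀ i j, ∀ (wi : Hk i) (wj : Hk j),
      |a (R i wi) (R j wj)| ≤
        ε i j * Real.sqrt (a (R i wi) (R i wi)) * Real.sqrt (a (R j wj) (R j wj)))
    (w : ∀ k, Hk k) :
    a (∑ k, R k (w k)) (∑ k, R k (w k)) ≤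
      (Finset.univ.sup' (Finset.univ_nonempty_iff.mpr ⟨⟨0, hN⟩⟩) hε.eigenvalues) *
        ∑ k, a (R k (w k)) (R k (w k)) := by
  classical
  set x : Fin N → H := fun k => R k (w k) with hx
  have ha0 : ∀ y : H, 0 ≤ a y y := by
    intro y
    by_cases hy : y = 0
    · simp [hy]
    · exact (hpos y hy).le
  set s : Fin N → ℝ := fun k => Real.sqrt (a (x k) (x k)) with hs
  have hs2 : ∀ k, s k ^ 2 = a (x k) (x k) := fun k => Real.sq_sqrt (ha0 _)
  have hexpand : a (∑ k, x k) (∑ k, x k) = ∑ i, ∑ j, a (x i) (x j) := by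
    have h1 : ∀ y, a (∑ k, x k) y = ∑ i, a (x i) y := by
      intro y
      rw [map_sum a x Finset.univ, ContinuousLinearMap.sum_apply]
    rw [h1]
    exact Finset.sum_congr rfl fun i _ => map_sum (a (x i)) _ _
  have hstep : a (∑ k, x k) (∑ k, x k) ≤ s ⬝ᵥ ε.mulVec s := by
    rw [hexpand]
    have : s ⬝ᵥ ε.mulVec s = ∑ i, ∑ j, ε i j * s i * s j := by
      simp [dotProduct, Matrix.mulVec, Finset.mul_sum]
      apply Finset.sum_congr rfl; intro i _
      apply Finset.sum_congr rfl; intro j _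
      ring
    rw [this]
    apply Finset.sum_le_sum; intro i _
    apply Finset.sum_le_sum; intro j _
    exact (le_abs_self _).trans (hCS i j (w i) (w j))
  have hne : (Finset.univ : Finset (Fin N)).Nonempty := Finset.univ_nonempty_iff.mpr ⟨⟨0, hN⟩⟩
  have hquad := quad_le_sup_eigen hne ε hε s
  have hfinal : s ⬝ᵥ s = ∑ k, a (x k) (x k) := by
    simp only [dotProduct]
    apply Finset.sum_congr rfl; intro k _
    rw [← hs2 k]; ring
  calc a (∑ k, x k) (∑ k, x k) ≤ s ⬝ᵥ ε.mulVec s := hstep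
    _ ≤ _ * (s ⬝ᵥ s) := hquad
    _ = _ := by rw [hfinal]
end

section
/- Let $V$ be a reflexive Banach space, $F : V \to \mathbb{R}$ convex Fréchet differentiable, $G \in \Gamma_0(V)$, and $E = F + G$ with minimizer $u^*$. Suppose $B : V \times V \to \overline{\mathbb{R}}$ satisfies, for constants $q > 1$, $\theta \in (0,1]$, $L > 0$ and a convex set $K_0$ containing the iterates and $u^*$ with $\|u - u^*\| \le R_0$ for all $u \in K_0$: $D_F(u,v) + G(u) \le B(u,v) \le \frac{L}{q}\|u-v\|^q + \theta G\left(\frac{1}{\theta}u - (\frac{1}{\theta}-1)v\right) + (1-\theta)G(v)$ for $u, v \in K_0 \cap \mathrm{dom}\, G$. Let $u^{(n+1)} \in \arg\min_u \{F(u^{(n)}) + \langle F'(u^{(n)}), u - u^{(n)}\rangle + B(u, u^{(n)})\}$. Then for each $n$, setting $\zeta_n = E(u^{(n)}) - E(u^*)$: if $\zeta_n \ge \theta^{q-1} L R_0^q$ then $\zeta_{n+1} \le (1 - \theta(1 - 1/q))\zeta_n$; otherwise $\zeta_n - \zeta_{n+1} \ge \frac{1}{(L R_0^q)^{1/(q-1)}}(1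 - 1/q)\,\zeta_n^{q/(q-1)}$. -/
/-!
Compare the model minimized by `u (n + 1)` with its value at the convex combination
`x = u n + t • (ustar - u n)`, `0 ≤ t ≤ θ`. The lower bound on `B` turns the model at `u (n + 1)`
into an upper bound for `E (u (n + 1))`; at `x` the upper bound on `B`, convexity of `G` and the
gradient inequality for `F` give `ζ (n + 1) ≤ (1 - t) ζ n + (L / q) t ^ q R0 ^ q`. Choosing
`t = θ` when `ζ n` is large, and otherwise the unconstrained minimizer
`t = (ζ n / (L R0 ^ q)) ^ (1 / (q - 1))`, yields the two rates.
-/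

open Set

theorem EReal.eq_coe_sub_of_coe_add_eq {a c : ℝ} {b : EReal} (h : (a : EReal) + b = c) :
    b = ((c - a : ℝ) : EReal) := by
  induction b with
  | bot => simp at h
  | top => simp at h
  | coe b => norm_cast at h ⊢; linarith

theorem ConvexOn.apply_sub_le_sub_of_hasFDerivAt {V : Type*} [NormedAddCommGroup V]
    [NormedSpace ℝ V] {s : Set V} {F : V → ℝ} {f' : V →L[ℝ] ℝ} {v w : V}
    (hF : ConvexOn ℝ s F) (hv : v ∈ s) (hw : w ∈ s) (hd : HasFDerivAt F f' v) :
    f' (w - v) ≤ F w - F v := by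
  let ℓ : ℝ →ᵃ[ℝ] V := AffineMap.lineMap v w
  have hφ : ConvexOn ℝ (ℓ ⁻¹' s) (F ∘ ℓ) := hF.comp_affineMap ℓ
  have hφ' : HasDerivAt (F ∘ ℓ) (f' (w - v)) 0 :=
    (by simpa [ℓ] using hd : HasFDerivAt F f' (ℓ 0)).comp_hasDerivAt 0
      AffineMap.hasDerivAt_lineMap
  simpa [ℓ, slope] using
    hφ.le_slope_of_hasDerivAt (by simpa [ℓ] using hv) (by simpa [ℓ] using hw) zero_lt_one hφ'

theorem ConvexOn.tangent_add_rpow_norm_le {V : Type*} [NormedAddCommGroup V] [NormedSpace ℝ V]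
    {s : Set V} {F : V → ℝ} {f' : V →L[ℝ] ℝ} {u v : V} {q L R t : ℝ}
    (hF : ConvexOn ℝ s F) (hu : u ∈ s) (hv : v ∈ s) (hd : HasFDerivAt F f' v)
    (hq : 0 < q) (hL : 0 ≤ L) (ht : 0 ≤ t) (hR : ‖u - v‖ ≤ R) :
    F v + f' (t • (u - v)) + L / q * ‖t • (u - v)‖ ^ q ≤
      (1 - t) * F v + t * F u + L / q * t ^ q * R ^ q := by
  have hlin : t * f' (u - v) ≤ t * (F u - F v) :=
    mul_le_mul_of_nonneg_left (hF.apply_sub_le_sub_of_hasFDerivAt hv hu hd) ht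
  have hnorm : ‖t • (u - v)‖ ^ q ≤ t ^ q * R ^ q := by
    rw [← Real.mul_rpow ht ((norm_nonneg _).trans hR), norm_smul, Real.norm_of_nonneg ht]
    gcongr
  rw [map_smul, smul_eq_mul]
  have : L / q * ‖t • (u - v)‖ ^ q ≤ L / q * (t ^ q * R ^ q) := by gcongr
  linarith

section Descent

variable {V : Type*} [NormedAddCommGroup V] [NormedSpace ℝ V]
  {F : V → ℝ} {F' : V → V →L[ℝ] ℝ} {G : V → EReal} {B : V × V → EReal} {K0 : Set V} {q θ L : ℝ}

def IsBregmanSandwich (F : V → ℝ) (F' : V → V →L[ℝ] ℝ) (G : V → EReal) (B : V × V → EReal)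
    (K0 : Set V) (q θ L : ℝ) : Prop :=
  ∀ u v : V, u ∈ K0 → v ∈ K0 → G u < ⊤ → G v < ⊤ →
      ((F u - F v - F' v (u - v) : ℝ) : EReal) + G u ≤ B (u, v) ∧
      B (u, v) ≤ ((L / q * ‖u - v‖ ^ q : ℝ) : EReal)
        + (θ : EReal) * G ((1 / θ) • u - ((1 / θ) - 1) • v)
        + ((1 - θ : ℝ) : EReal) * G v

theorem IsBregmanSandwich.energy_le_of_model_le (hB : IsBregmanSandwich F F' G B K0 q θ L)
    {v v' x : V} (hv : v ∈ K0) (hv' : v' ∈ K0) (hx : x ∈ K0)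
    (hGv : G v < ⊤) (hGv' : G v' < ⊤) (hGx : G x < ⊤)
    (hmodel : ((F v + F' v (v' - v) : ℝ) : EReal) + B (v', v) ≤
      ((F v + F' v (x - v) : ℝ) : EReal) + B (x, v)) :
    (F v' : EReal) + G v' ≤ ((F v + F' v (x - v) + L / q * ‖x - v‖ ^ q : ℝ) : EReal)
      + (θ : EReal) * G ((1 / θ) • x - ((1 / θ) - 1) • v) + ((1 - θ : ℝ) : EReal) * G v := by
  calc (F v' : EReal) + G v'
      = ((F v + F' v (v' - v) : ℝ) : EReal)
          + (((F v' - F v - F' v (v' - v) : ℝ) : EReal) + G v') := by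
        rw [← add_assoc, ← EReal.coe_add]; ring_nf
    _ ≤ ((F v + F' v (v' - v) : ℝ) : EReal) + B (v', v) := by
        gcongr; exact (hB v' v hv' hv hGv' hGv).1
    _ ≤ ((F v + F' v (x - v) : ℝ) : EReal) + B (x, v) := hmodel
    _ ≤ _ := by
        grw [(hB x v hx hv hGx hGv).2, EReal.coe_add _ (L / q * _)]
        simp only [add_assoc, le_refl]

theorem IsBregmanSandwich.descent_bound (hB : IsBregmanSandwich F F' G B K0 q θ L)
    (hF : ConvexOn ℝ K0 F) (hGconvex : ∀ u v : V, ∀ t : ℝ, 0 ≤ t → t ≤ 1 →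
      G (t • u + (1 - t) • v) ≤ (t : EReal) * G u + ((1 - t : ℝ) : EReal) * G v)
    (hK0 : Convex ℝ K0) (hq : 0 < q) (hθ0 : 0 < θ) (hθ1 : θ ≤ 1) (hL : 0 ≤ L)
    {ustar v v' : V} {R0 : ℝ} (hustar : ustar ∈ K0) (hv : v ∈ K0) (hv' : v' ∈ K0)
    (hR : ‖v - ustar‖ ≤ R0) (hd : HasFDerivAt F (F' v) v)
    (hmodel : ∀ x, ((F v + F' v (v' - v) : ℝ) : EReal) + B (v', v) ≤
      ((F v + F' v (x - v) : ℝ) : EReal) + B (x, v))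
    {es e e' : ℝ} (hes : (F ustar : EReal) + G ustar = es) (he : (F v : EReal) + G v = e)
    (he' : (F v' : EReal) + G v' = e') {t : ℝ} (ht0 : 0 ≤ t) (htθ : t ≤ θ) :
    e' ≤ (1 - t) * e + t * es + L / q * t ^ q * R0 ^ q := by
  have hGs := EReal.eq_coe_sub_of_coe_add_eq hes
  have hGv := EReal.eq_coe_sub_of_coe_add_eq he
  have hGv' : G v' < ⊤ := by
    rw [EReal.eq_coe_sub_of_coe_add_eq he']; exact EReal.coe_lt_top _
  set x := t • ustar + (1 - t) • v
  have hx : x ∈ K0 := hK0 hustar hv ht0 (by linarith) (by ring)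
  have hGx : G x < ⊤ := by
    refine (hGconvex ustar v t ht0 (by linarith)).trans_lt ?_
    rw [hGs, hGv]; norm_cast; exact EReal.coe_lt_top _
  have hw : (1 / θ) • x - (1 / θ - 1) • v = (t / θ) • ustar + (1 - t / θ) • v := by
    simp only [x]; match_scalars <;> field_simp; ring
  have hGw : (θ : EReal) * G ((1 / θ) • x - (1 / θ - 1) • v) + ((1 - θ : ℝ) : EReal) * G v ≤
      ((t * (es - F ustar) + (1 - t) * (e - F v) : ℝ) : EReal) := by
    calc _ ≤ (θ : EReal) * (((t / θ : ℝ) : EReal) * G ustar + ((1 - t / θ : ℝ) : EReal) * G v)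
          + ((1 - θ : ℝ) : EReal) * G v := by
          rw [hw]
          gcongr
          exact hGconvex _ _ _ (by positivity) ((div_le_one hθ0).mpr htθ)
      _ = _ := by
          rw [hGs, hGv]
          norm_cast
          field_simp
          ring
  have hchain := hB.energy_le_of_model_le hv hv' hx (hGv ▸ EReal.coe_lt_top _) hGv' hGx (hmodel x)
  rw [add_assoc, he'] at hchain
  have hreal : e' ≤ F v + F' v (x - v) + L / q * ‖x - v‖ ^ q +
      (t * (es - F ustar) + (1 - t) * (e - F v)) := by
    rw [← EReal.coe_le_coe_iff, EReal.coe_add]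
    exact hchain.trans (by gcongr)
  have hxv : x - v = t • (ustar - v) := by simp only [x]; module
  rw [hxv] at hreal
  have := hF.tangent_add_rpow_norm_le (R := R0) hustar hv hd hq hL ht0 (by rwa [norm_sub_rev])
  linarith

end Descent

section Rate

variable {q θ C ζ ζ' : ℝ}

theorem linear_decrease_of_descent_bound (hq : 1 < q) (hθ : 0 < θ) (hlarge : θ ^ (q - 1) * C ≤ ζ)
    (h : ζ' ≤ ζ - θ * ζ + C / q * θ ^ q) :
    ζ' ≤ (1 - θ * (1 - 1 / q)) * ζ := by
  have hθq : θ ^ q = θ * θ ^ (q - 1) := by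
    rw [← Real.rpow_one_add' hθ.le (by linarith), add_sub_cancel]
  have : C / q * θ ^ q ≤ θ / q * ζ := by
    rw [hθq, show C / q * (θ * θ ^ (q - 1)) = θ / q * (θ ^ (q - 1) * C) by ring]
    gcongr
  linarith [show (1 - θ * (1 - 1 / q)) * ζ = ζ - θ * ζ + θ / q * ζ by ring]

theorem power_decrease_of_descent_bound (hq : 1 < q) (hθ : 0 < θ) (hC : 0 < C) (hζ : 0 ≤ ζ)
    (hsmall : ζ < θ ^ (q - 1) * C)
    (h : ∀ t, 0 ≤ t → t ≤ θ → ζ' ≤ ζ - t * ζ + C / q * t ^ q) :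
    1 / C ^ (1 / (q - 1)) * (1 - 1 / q) * ζ ^ (q / (q - 1)) ≤ ζ - ζ' := by
  have hq1 : q - 1 ≠ 0 := by linarith
  set t := (ζ / C) ^ (1 / (q - 1)) with ht
  have ht0 : 0 ≤ t := by positivity
  have htq1 : t ^ (q - 1) = ζ / C := by
    rw [ht, ← Real.rpow_mul (by positivity), one_div_mul_cancel hq1, Real.rpow_one]
  have htθ : t ≤ θ := by
    rw [← Real.rpow_le_rpow_iff ht0 hθ.le (by linarith : 0 < q - 1), htq1, div_le_iff₀ hC]
    exact hsmall.le
  have hCt : C / q * t ^ q = t * ζ / q := by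
    have htq : t ^ q = t ^ (q - 1) * t := by
      rw [← Real.rpow_add_one' ht0 (by linarith), sub_add_cancel]
    rw [htq, htq1]
    field_simp
  have htζ : t * ζ = ζ ^ (q / (q - 1)) / C ^ (1 / (q - 1)) := by
    rw [ht, Real.div_rpow hζ hC.le, show q / (q - 1) = 1 / (q - 1) + 1 by field_simp; ring,
      Real.rpow_add' hζ (by positivity), Real.rpow_one]
    ring
  have := h t ht0 htθ
  calc 1 / C ^ (1 / (q - 1)) * (1 - 1 / q) * ζ ^ (q / (q - 1)) = t * ζ - t * ζ / q := by
        rw [htζ]; ring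
    _ ≤ ζ - ζ' := by linarith

end Rate

theorem stmt8_general {V : Type*} [NormedAddCommGroup V] [NormedSpace ℝ V]
    (F : V → ℝ) (F' : V → V →L[ℝ] ℝ) (hF : ConvexOn ℝ Set.univ F)
    (hF' : ∀ v, HasFDerivAt F (F' v) v)
    (G : V → EReal)
    (hGconvex : ∀ u v : V, ∀ t : ℝ, 0 ≤ t → t ≤ 1 →
      G (t • u + (1 - t) • v) ≤ (t : EReal) * G u + ((1 - t : ℝ) : EReal) * G v)
    (E : V → EReal) (hE : ∀ u, E u = (F u : EReal) + G u)
    (ustar : V) (hmin : ∀ u, E ustar ≤ E u)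
    (q θ L R0 : ℝ) (hq : 1 < q) (hθ0 : 0 < θ) (hθ1 : θ ≤ 1) (hL : 0 < L) (hR0 : 0 < R0)
    (K0 : Set V) (hK0 : Convex ℝ K0) (hustar : ustar ∈ K0)
    (hR : ∀ x ∈ K0, ‖x - ustar‖ ≤ R0)
    (B : V × V → EReal)
    (hB : ∀ u v : V, u ∈ K0 → v ∈ K0 → G u < ⊤ → G v < ⊤ →
      ((F u - F v - F' v (u - v) : ℝ) : EReal) + G u ≤ B (u, v) ∧
      B (u, v) ≤ ((L / q * ‖u - v‖ ^ q : ℝ) : EReal)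
        + (θ : EReal) * G ((1 / θ) • u - ((1 / θ) - 1) • v)
        + ((1 - θ : ℝ) : EReal) * G v)
    (u : ℕ → V) (hu : ∀ n, u n ∈ K0)
    (hiter : ∀ n : ℕ, ∀ x : V,
      ((F (u n) + F' (u n) (u (n + 1) - u n) : ℝ) : EReal) + B (u (n + 1), u n) ≤
        ((F (u n) + F' (u n) (x - u n) : ℝ) : EReal) + B (x, u n))
    (Estar : ℝ) (hEstar : E ustar = (Estar : EReal))
    (ζ : ℕ → ℝ) (hζ : ∀ n, E (u n) = ((ζ n + Estar : ℝ) : EReal)) :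
    ∀ n : ℕ,
      (θ ^ (q - 1) * L * R0 ^ q ≤ ζ n →
        ζ (n + 1) ≤ (1 - θ * (1 - 1 / q)) * ζ n) ∧
      (ζ n < θ ^ (q - 1) * L * R0 ^ q →
        1 / (L * R0 ^ q) ^ (1 / (q - 1)) * (1 - 1 / q) * ζ n ^ (q / (q - 1)) ≤
          ζ n - ζ (n + 1)) := by
  intro n
  have hζ0 : 0 ≤ ζ n := by
    have := hmin (u n)
    rw [hEstar, hζ n, EReal.coe_le_coe_iff] at this
    linarith
  have hstep : ∀ t, 0 ≤ t → t ≤ θ → ζ (n + 1) ≤ ζ n - t * ζ n + L * R0 ^ q / q * t ^ q := by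
    intro t ht0 htθ
    have := (show IsBregmanSandwich F F' G B K0 q θ L from hB).descent_bound
      (hF.subset (subset_univ _) hK0) hGconvex hK0 (by linarith) hθ0 hθ1 hL.le hustar (hu n)
      (hu (n + 1)) (hR _ (hu n)) (hF' (u n)) (hiter n) (by rw [← hE, hEstar])
      (by rw [← hE, hζ n]) (by rw [← hE, hζ (n + 1)]) ht0 htθ
    linarith [show L / q * t ^ q * R0 ^ q = L * R0 ^ q / q * t ^ q by ring]
  refine ⟨fun hlarge => ?_, fun hsmall => ?_⟩
  · exact linear_decrease_of_descent_bound hq hθ0 (by rwa [← mul_assoc])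
      (hstep θ hθ0.le le_rfl)
  · exact power_decrease_of_descent_bound hq hθ0 (by positivity) hζ0 (by rwa [← mul_assoc]) hstep

/-- One-step estimate for the abstract gradient method (Theorem on convergence
of the abstract gradient method): linear decrease when the error is large, and a
power-type decrease otherwise. -/
theorem stmt8 {V : Type*} [NormedAddCommGroup V] [NormedSpace ℝ V]
    (F : V → ℝ) (F' : V → V →L[ℝ] ℝ) (hF : ConvexOn ℝ Set.univ F)
    (hF' : ∀ v, HasFDerivAt F (F' v) v)
    (G : V → EReal) (hGproper : ∃ u, G u ≠ ⊤) (hGbot : ∀ u, G u ≠ ⊥)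
    (hGconvex : ∀ u v : V, ∀ t : ℝ, 0 ≤ t → t ≤ 1 →
      G (t • u + (1 - t) • v) ≤ (t : EReal) * G u + ((1 - t : ℝ) : EReal) * G v)
    (hGlsc : LowerSemicontinuous G)
    (E : V → EReal) (hE : ∀ u, E u = (F u : EReal) + G u)
    (ustar : V) (hmin : ∀ u, E ustar ≤ E u)
    (q θ L R0 : ℝ) (hq : 1 < q) (hθ0 : 0 < θ) (hθ1 : θ ≤ 1) (hL : 0 < L) (hR0 : 0 < R0)
    (K0 : Set V) (hK0 : Convex ℝ K0) (hustar : ustar ∈ K0)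
    (hR : ∀ x ∈ K0, ‖x - ustar‖ ≤ R0)
    (B : V × V → EReal)
    (hB : ∀ u v : V, u ∈ K0 → v ∈ K0 → G u < ⊤ → G v < ⊤ →
      ((F u - F v - F' v (u - v) : ℝ) : EReal) + G u ≤ B (u, v) ∧
      B (u, v) ≤ ((L / q * ‖u - v‖ ^ q : ℝ) : EReal)
        + (θ : EReal) * G ((1 / θ) • u - ((1 / θ) - 1) • v)
        + ((1 - θ : ℝ) : EReal) * G v)
    (u : ℕ → V) (hu : ∀ n, u n ∈ K0) (hudom : ∀ n, G (u n) < ⊤)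
    (hiter : ∀ n : ℕ, ∀ x : V,
      ((F (u n) + F' (u n) (u (n + 1) - u n) : ℝ) : EReal) + B (u (n + 1), u n) ≤
        ((F (u n) + F' (u n) (x - u n) : ℝ) : EReal) + B (x, u n))
    (Estar : ℝ) (hEstar : E ustar = (Estar : EReal))
    (ζ : ℕ → ℝ) (hζ : ∀ n, E (u n) = ((ζ n + Estar : ℝ) : EReal)) :
    ∀ n : ℕ,
      (θ ^ (q - 1) * L * R0 ^ q ≤ ζ n →
        ζ (n + 1) ≤ (1 - θ * (1 - 1 / q)) * ζ n) ∧
      (ζ n < θ ^ (q - 1) * L * R0 ^ q →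
        1 / (L * R0 ^ q) ^ (1 / (q - 1)) * (1 - 1 / q) * ζ n ^ (q / (q - 1)) ≤
          ζ n - ζ (n + 1)) :=
  stmt8_general F F' hF hF' G hGconvex E hE ustar hmin q θ L R0 hq hθ0 hθ1 hL hR0 K0 hK0 hustar hR B
    hB u hu hiter Estar hEstar ζ hζ
end

section
/- Let $\{\zeta_n\}$ be a nonnegative sequence satisfying $\zeta_{n+1} \le \min_{t \in [0,\theta]} \left(1 - t + \frac{L t^q}{\mu}\right) \zeta_n$ for all $n$, with $q > 1$, $\theta \in (0,1]$, $L, \mu > 0$. Then $\zeta_n \le \left(1 - (1 - \frac{1}{q})\min\left\{\theta, \left(\frac{\mu}{qL}\right)^{1/(q-1)}\right\}\right)^n \zeta_0$ for all $n \ge 0$. -/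
/-- Linear convergence for the abstract gradient method in the sharp case `p = q`. -/
theorem stmt10 (q θ L μ : ℝ) (hq : 1 < q) (hθ0 : 0 < θ) (hθ1 : θ ≤ 1)
    (hL : 0 < L) (hμ : 0 < μ)
    (ζ : ℕ → ℝ) (hnonneg : ∀ n, 0 ≤ ζ n)
    (hstep : ∀ n : ℕ, ∀ t ∈ Set.Icc (0 : ℝ) θ,
      ζ (n + 1) ≤ (1 - t + L * t ^ q / μ) * ζ n) :
    ∀ n : ℕ, ζ n ≤ (1 - (1 - 1 / q) * min θ ((μ / (q * L)) ^ (1 / (q - 1)))) ^ n * ζ 0 := by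
  have hq0 : (0:ℝ) < q := lt_trans one_pos hq
  have hq1 : q - 1 ≠ 0 := by linarith
  have hbase : (0:ℝ) < μ / (q * L) := div_pos hμ (mul_pos hq0 hL)
  set c := (μ / (q * L)) ^ (1 / (q - 1)) with hc
  have hcpos : 0 < c := Real.rpow_pos_of_pos hbase _
  set m := min θ c with hm
  have hm0 : 0 < m := lt_min hθ0 hcpos
  have hmθ : m ≤ θ := min_le_left _ _
  have hmc : m ≤ c := min_le_right _ _
  have hm1 : m ≤ 1 := le_trans hmθ hθ1
  -- key: m ^ (q-1) ≤ μ / (q*L)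
  have hkey : m ^ (q - 1) ≤ μ / (q * L) := by
    have h1 : m ^ (q - 1) ≤ c ^ (q - 1) :=
      Real.rpow_le_rpow hm0.le hmc (by linarith)
    have h2 : c ^ (q - 1) = μ / (q * L) := by
      rw [hc, ← Real.rpow_mul hbase.le, one_div, inv_mul_cancel₀ hq1, Real.rpow_one]
    linarith [h1, h2.le]
  have hsplit : m ^ q = m * m ^ (q - 1) := by
    have h : m ^ q = m ^ (1 + (q - 1)) := by ring_nf
    rw [h, Real.rpow_add hm0, Real.rpow_one]
  -- factor bound
  have hfac : 1 - m + L * m ^ q / μ ≤ 1 - (1 - 1 / q) * m := by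
    have : L * m ^ q / μ ≤ m / q := by
      rw [hsplit, div_le_div_iff₀ hμ hq0]
      have : L * m ^ (q - 1) ≤ μ / q := by
        have := mul_le_mul_of_nonneg_left hkey hL.le
        calc L * m ^ (q - 1) ≤ L * (μ / (q * L)) := this
          _ = μ / q := by field_simp
      calc L * (m * m ^ (q - 1)) * q = (L * m ^ (q - 1)) * (m * q) := by ring
        _ ≤ (μ / q) * (m * q) := by
            exact mul_le_mul_of_nonneg_right this (by positivity)
        _ = m * μ := by field_simp
    have h4 : m / q = (1 / q) * m := by ring
    linarith
  set r := 1 - (1 - 1 / q) * m with hr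
  have hr0 : 0 ≤ r := by
    have h3 : 0 ≤ (1 / q) * m := by positivity
    have h4 : (1 - 1 / q) * m = m - (1 / q) * m := by ring
    rw [hr, h4]
    linarith
  intro n
  induction n with
  | zero => simp
  | succ n ih =>
      have hmem : m ∈ Set.Icc (0:ℝ) θ := ⟨hm0.le, hmθ⟩
      calc ζ (n + 1) ≤ (1 - m + L * m ^ q / μ) * ζ n := hstep n m hmem
        _ ≤ r * ζ n := mul_le_mul_of_nonneg_right hfac (hnonneg n)
        _ ≤ r * (r ^ n * ζ 0) := mul_le_mul_of_nonneg_left ih hr0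
        _ = r ^ (n + 1) * ζ 0 := by ring
end

section
/- Let $H$ be a real Hilbert space with SPD bilinear form $a$ (inducing norm $\|\cdot\|_A$), and let $H_k$ ($1 \le k \le N$) be Hilbert spaces with bounded linear $R_k^* : H_k \to H$ and SPD bilinear forms $\tilde{a}_k$ on $H_k$. Assume: (i) stable decomposition: every $w \in H$ admits $w = \sum_k R_k^* w_k$ with $\sum_k \tilde{a}_k(w_k, w_k) \le C_0^2 \|w\|_A^2$; (ii) there is $\tau_0 > 0$ with $a(\sum_k R_k^* w_k, \sum_k R_k^* w_k) \le \frac{1}{\tau_0}\sum_k a(R_k^* w_k, R_k^* w_k)$ for all $w_k \in H_k$; (iii) local stability: $a(R_k^* w_k, R_k^* w_k) \le \omega_0 \tilde{a}_k(w_k, w_k)$ for all $w_k$. Define $m(w) = \inf\{\sum_k \tilde{a}_k(w_k, w_k) : w = \sum_k R_k^* w_k\}$. Then for all $w \in H$: $\frac{\tau_0}{\omega_0}\|w\|_A^2 \le m(w) \le C_0^2 \|w\|_A^2$. -/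
open scoped BigOperators

/-- Classical additive Schwarz condition-number bound: under stable
decomposition, strengthened convexity, and local stability, the additive
Schwarz quadratic form `m(w)` is spectrally equivalent to `a(w,w)`. -/
theorem stmt16 {H : Type*} [NormedAddCommGroup H] [InnerProductSpace ℝ H] [CompleteSpace H]
    {N : ℕ}
    (Hk : Fin N → Type*) [∀ k, NormedAddCommGroup (Hk k)]
    [∀ k, InnerProductSpace ℝ (Hk k)] [∀ k, CompleteSpace (Hk k)]
    (R : ∀ k, Hk k →L[ℝ] H)
    (a : H →L[ℝ] H →L[ℝ] ℝ)
    (ha_symm : ∀ x y, a x y = a y x) (ha_pos : ∀ x, x ≠ 0 → 0 < a x x)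
    (ta : ∀ k, Hk k →L[ℝ] Hk k →L[ℝ] ℝ)
    (hta_symm : ∀ k, ∀ x y : Hk k, ta k x y = ta k y x)
    (hta_pos : ∀ k, ∀ x : Hk k, x ≠ 0 → 0 < ta k x x)
    (C0 τ0 ω0 : ℝ) (hC0 : 0 < C0) (hτ0 : 0 < τ0) (hω0 : 0 < ω0)
    (hstable : ∀ w : H, ∃ wk : ∀ k, Hk k, w = ∑ k, R k (wk k) ∧
      ∑ k, ta k (wk k) (wk k) ≤ C0 ^ 2 * a w w)
    (hconv : ∀ wk : ∀ k, Hk k,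
      a (∑ k, R k (wk k)) (∑ k, R k (wk k)) ≤
        (1 / τ0) * ∑ k, a (R k (wk k)) (R k (wk k)))
    (hlocal : ∀ k, ∀ wk : Hk k, a (R k wk) (R k wk) ≤ ω0 * ta k wk wk) :
    ∀ w : H,
      τ0 / ω0 * a w w ≤
        sInf {s : ℝ | ∃ wk : ∀ k, Hk k,
          w = ∑ k, R k (wk k) ∧ s = ∑ k, ta k (wk k) (wk k)} ∧
      sInf {s : ℝ | ∃ wk : ∀ k, Hk k,
          w = ∑ k, R k (wk k) ∧ s = ∑ k, ta k (wk k) (wk k)} ≤ C0 ^ 2 * a w w := by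
  intro w
  set S := {s : ℝ | ∃ wk : ∀ k, Hk k,
      w = ∑ k, R k (wk k) ∧ s = ∑ k, ta k (wk k) (wk k)} with hS
  have hlb : ∀ s ∈ S, τ0 / ω0 * a w w ≤ s := by
    rintro s ⟨wk, hw, rfl⟩
    have h1 := hconv wk
    rw [← hw] at h1
    have h2 : ∑ k, a (R k (wk k)) (R k (wk k)) ≤ ω0 * ∑ k, ta k (wk k) (wk k) := by
      rw [Finset.mul_sum]
      exact Finset.sum_le_sum fun k _ => hlocal k (wk k)
    have : a w w ≤ (1 / τ0) * (ω0 * ∑ k, ta k (wk k) (wk k)) := by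
      refine h1.trans ?_
      exact mul_le_mul_of_nonneg_left h2 (by positivity)
    calc τ0 / ω0 * a w w ≤ τ0 / ω0 * ((1 / τ0) * (ω0 * ∑ k, ta k (wk k) (wk k))) :=
          mul_le_mul_of_nonneg_left this (by positivity)
      _ = ∑ k, ta k (wk k) (wk k) := by field_simp
  obtain ⟨wk, hw, hle⟩ := hstable w
  have hmem : (∑ k, ta k (wk k) (wk k)) ∈ S := ⟨wk, hw, rfl⟩
  refine ⟨le_csInf ⟨_, hmem⟩ hlb, csInf_le_of_le ?_ hmem hle⟩
  exact ⟨τ0 / ω0 * a w w, fun s hs => hlb s hs⟩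
end

section
/- Let $V$ be a reflexive Banach space and $G : V \to \overline{\mathbb{R}}$ convex. Suppose $G_k : V_k \times V \to \overline{\mathbb{R}}$ and $R_k^* : V_k \to V$ are such that $G(v + R_k^* w_k) \le G_k(w_k, v)$ for all $v \in \mathrm{dom}\, G$, $w_k \in V_k$ (local stability), and for $\tau \in (0, 1/N]$ the strengthened convexity inequality $(1 - \tau N)E(v) + \tau \sum_k E(v + R_k^* w_k) \ge E(v + \tau\sum_k R_k^* w_k)$ holds for $E = F + G$ with $F$ convex Fréchet differentiable. Then for any $u, v \in \mathrm{dom}\, G$ and any $w_k \in V_k$ with $u - v = \tau \sum_{k=1}^N R_k^* w_k$: $\tau \sum_{k=1}^N \big(\omega\, d_k(w_k, v) + G_k(w_k, v)\big) + (1 - \tau N) G(v) \ge D_F(u,v) + G(u)$, provided $D_F(v + R_k^* w_k, v) \le \omega\, d_k(w_k, v)$ for each $k$. -/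
open scoped BigOperators

/-! The Bregman divergence `D_F(u, v)` is `F u` minus the linearization `F v + F' v (u - v)`.
Feeding `x = v` into the strengthened convexity inequality and bounding each local term
`E (v + Rₖ* wₖ)` by the local stability estimates leaves the real part
`(1 - τN) F v + τ ∑ₖ (F v + F' v (Rₖ* wₖ))`, which by `u - v = τ ∑ₖ Rₖ* wₖ` is exactly that
linearization; cancelling it on both sides gives the claim. -/

namespace EReal

theorem coe_finset_sum {ι : Type*} (s : Finset ι) (f : ι → ℝ) :
    ((∑ i ∈ s, f i : ℝ) : EReal) = ∑ i ∈ s, (f i : EReal) :=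
  map_sum (⟨⟨Real.toEReal, coe_zero⟩, coe_add⟩ : ℝ →+ EReal) f s

/-- Holds for every real `r`, including negative ones: as `a` is finite, no `⊤ + ⊥` arises. -/
theorem coe_mul_coe_add (r a : ℝ) (x : EReal) :
    (r : EReal) * (a + x) = ↑(r * a) + r * x := by
  rcases le_or_gt 0 r with hr | hr
  · rw [left_distrib_of_nonneg_of_ne_top (by exact_mod_cast hr) (coe_ne_top r), coe_mul]
  · have hr' : (r : EReal) < 0 := by exact_mod_cast hr
    induction x with
    | bot => simp [mul_bot_of_neg hr', -coe_mul]
    | top => simp [mul_top_of_neg hr']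
    | coe x => norm_cast; ring

end EReal

theorem stmt18_general {V : Type*} [NormedAddCommGroup V] [NormedSpace ℝ V]
    {N : ℕ}
    (Vk : Fin N → Type*) [∀ k, AddCommGroup (Vk k)] [∀ k, Module ℝ (Vk k)]
    (R : ∀ k, Vk k →ₗ[ℝ] V)
    (F : V → ℝ) (F' : V → V →L[ℝ] ℝ)
    (G : V → EReal)
    (E : V → EReal) (hE : ∀ x, E x = (F x : EReal) + G x)
    (d : ∀ k, Vk k → V → EReal) (Gk : ∀ k, Vk k → V → EReal)
    (ω : ℝ)
    (hlocalF : ∀ x : V, G x < ⊤ → ∀ k (wk : Vk k),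
      ((F (x + R k wk) - F x - F' x (R k wk) : ℝ) : EReal) ≤ (ω : EReal) * d k wk x)
    (hlocalG : ∀ x : V, G x < ⊤ → ∀ k (wk : Vk k),
      G (x + R k wk) ≤ Gk k wk x)
    (τ : ℝ) (hτ0 : 0 < τ)
    (hsc : ∀ (x : V) (w : ∀ k, Vk k),
      E (x + τ • ∑ k, R k (w k)) ≤
        ((1 - τ * N : ℝ) : EReal) * E x + (τ : EReal) * ∑ k, E (x + R k (w k)))
    (u v : V) (hv : G v < ⊤)
    (w : ∀ k, Vk k) (hw : u - v = τ • ∑ k, R k (w k)) :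
    ((F u - F v - F' v (u - v) : ℝ) : EReal) + G u ≤
      (τ : EReal) * ∑ k, ((ω : EReal) * d k (w k) v + Gk k (w k) v) +
        ((1 - τ * N : ℝ) : EReal) * G v := by
  set A : EReal := ∑ k, ((ω : EReal) * d k (w k) v + Gk k (w k) v)
  set S : ℝ := ∑ k, (F v + F' v (R k (w k)))
  have hlocal : ∀ k, E (v + R k (w k)) ≤
      ↑(F v + F' v (R k (w k))) + ((ω : EReal) * d k (w k) v + Gk k (w k) v) := fun k => by
    have hsplit : F (v + R k (w k)) =
        (F v + F' v (R k (w k))) + (F (v + R k (w k)) - F v - F' v (R k (w k))) := by ring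
    rw [hE, hsplit, EReal.coe_add, add_assoc]
    gcongr
    exacts [hlocalF v hv k (w k), hlocalG v hv k (w k)]
  have hsum : ∑ k, E (v + R k (w k)) ≤ ↑S + A := by
    rw [EReal.coe_finset_sum, ← Finset.sum_add_distrib]
    exact Finset.sum_le_sum fun k _ => hlocal k
  have hlin : (1 - τ * N) * F v + τ * S = F v + F' v (u - v) := by
    simp only [S, hw, Finset.sum_add_distrib, Finset.sum_const, Finset.card_univ,
      Fintype.card_fin, nsmul_eq_mul, map_smul, map_sum, smul_eq_mul]
    ring
  have key : ↑(F v + F' v (u - v)) + (↑(F u - F v - F' v (u - v)) + G u) ≤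
      ↑(F v + F' v (u - v)) + (↑τ * A + ↑(1 - τ * N) * G v) :=
    calc ↑(F v + F' v (u - v)) + (↑(F u - F v - F' v (u - v)) + G u)
        = E (v + τ • ∑ k, R k (w k)) := by
          rw [← hw, add_sub_cancel, hE, ← add_assoc, ← EReal.coe_add]
          congr 2; ring
      _ ≤ ↑(1 - τ * N) * E v + ↑τ * ∑ k, E (v + R k (w k)) := hsc v w
      _ ≤ ↑(1 - τ * N) * E v + ↑τ * (↑S + A) := by gcongr
      _ = ↑(F v + F' v (u - v)) + (↑τ * A + ↑(1 - τ * N) * G v) := by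
          rw [hE, EReal.coe_mul_coe_add, EReal.coe_mul_coe_add, ← hlin, EReal.coe_add]
          abel
  exact (EReal.addLECancellable_coe _).add_le_add_iff_left.1 key

/-- Lower bound in the generalized additive Schwarz estimate:
`D_F(u,v) + G(u) ≤ τ ∑ (ω dₖ + Gₖ)(wₖ, v) + (1 - τN) G(v)` for any admissible
local decomposition `u - v = τ ∑ Rₖ* wₖ`. -/
theorem stmt18 {V : Type*} [NormedAddCommGroup V] [NormedSpace ℝ V]
    {N : ℕ} (hN : 0 < N)
    (Vk : Fin N → Type*) [∀ k, AddCommGroup (Vk k)] [∀ k, Module ℝ (Vk k)]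
    (R : ∀ k, Vk k →ₗ[ℝ] V)
    (F : V → ℝ) (F' : V → V →L[ℝ] ℝ) (hF : ConvexOn ℝ Set.univ F)
    (hF' : ∀ x, HasFDerivAt F (F' x) x)
    (G : V → EReal)
    (hGconv : ∀ x y : V, ∀ t : ℝ, 0 ≤ t → t ≤ 1 →
      G (t • x + (1 - t) • y) ≤ (t : EReal) * G x + ((1 - t : ℝ) : EReal) * G y)
    (E : V → EReal) (hE : ∀ x, E x = (F x : EReal) + G x)
    (d : ∀ k, Vk k → V → EReal) (Gk : ∀ k, Vk k → V → EReal)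
    (ω : ℝ) (hω : 0 < ω)
    (hlocalF : ∀ x : V, G x < ⊤ → ∀ k (wk : Vk k),
      ((F (x + R k wk) - F x - F' x (R k wk) : ℝ) : EReal) ≤ (ω : EReal) * d k wk x)
    (hlocalG : ∀ x : V, G x < ⊤ → ∀ k (wk : Vk k),
      G (x + R k wk) ≤ Gk k wk x)
    (τ : ℝ) (hτ0 : 0 < τ) (hτ1 : τ ≤ 1 / (N : ℝ))
    (hsc : ∀ (x : V) (w : ∀ k, Vk k),
      E (x + τ • ∑ k, R k (w k)) ≤
        ((1 - τ * N : ℝ) : EReal) * E x + (τ : EReal) * ∑ k, E (x + R k (w k)))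
    (u v : V) (hu : G u < ⊤) (hv : G v < ⊤)
    (w : ∀ k, Vk k) (hw : u - v = τ • ∑ k, R k (w k)) :
    ((F u - F v - F' v (u - v) : ℝ) : EReal) + G u ≤
      (τ : EReal) * ∑ k, ((ω : EReal) * d k (w k) v + Gk k (w k) v) +
        ((1 - τ * N : ℝ) : EReal) * G v :=
  stmt18_general Vk R F F' G E hE d Gk ω hlocalF hlocalG τ hτ0 hsc u v hv w hw
end
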